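/- arXiv:math/0405576 — 2 statements merged into one kernel-verified Lean document; each statement's English description precedes it below -/
import Mathlib

section
/- On the K-vector space 𝔤 ⊕ K, the bracket ⁅(x,s),(y,t)⁆ := ([x,y], c(x,y)) is K-bilinear, alternating, and satisfies the Jacobi identity, so it makes 𝔤 ⊕ K a Lie algebra over K; moreover the projection π(x,s) = x is a surjective Lie algebra homomorphism whose kernel {0} ⊕ K is contained in the center. Thus (𝔤 ⊕ K, π) is a one-dimensional central extension of 𝔤. -/
open scoped Classical in
/-- The 2-cocycle `c(x,y) = Σ_{α∈J, γ∈I∖J} x_α^γ y_γ^α − Σ_{α∈I∖J, γ∈J} x_α^γ y_γ^α`,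
where `x_γ^α = (b.repr ⁅x, b α⁆) γ` and the (possibly infinite) sums are taken as
finite sums over their finitely many nonzero terms (`finsum`). -/
noncomputable def fockCocycle {K : Type*} [Field K] {L : Type*} [LieRing L] [LieAlgebra K L]
    {W : Type*} [AddCommGroup W] [Module K W] [LieRingModule L W] [LieModule K L W]
    {I : Type*} (b : Module.Basis I K W) (J : Set I) (x y : L) : K :=
  (∑ᶠ p : I × I, if p.1 ∈ J ∧ p.2 ∉ J then
      b.repr ⁅x, b p.2⁆ p.1 * b.repr ⁅y, b p.1⁆ p.2 else 0)
  - (∑ᶠ p : I × I, if p.1 ∉ J ∧ p.2 ∈ J then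
      b.repr ⁅x, b p.2⁆ p.1 * b.repr ⁅y, b p.1⁆ p.2 else 0)

/-- The bracket `⁅(x,s),(y,t)⁆ = ([x,y], c(x,y))` on `𝔤 ⊕ K`. -/
noncomputable def extBracket {K : Type*} [Field K] {L : Type*} [LieRing L] [LieAlgebra K L]
    {W : Type*} [AddCommGroup W] [Module K W] [LieRingModule L W] [LieModule K L W]
    {I : Type*} (b : Module.Basis I K W) (J : Set I) (p q : L × K) : L × K :=
  (⁅p.1, q.1⁆, fockCocycle b J p.1 q.1)


/-!
With `ε` the indicator of `J`, the two double sums defining `c` combine into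
`c(x,y) = Σ_{α,γ} (ε α - ε γ) x_α^γ y_γ^α`. A nonzero term needs an entry of `x` or `y` carrying
some `w_α`, `α ∈ J`, out of `span J`, so the finiteness condition makes the sum finite.
Swapping `α` and `γ` gives `c(x,x) = 0`. Writing the matrix of `[y,z]` as a commutator,
`c(x,[y,z]) = T(x,y,z) - T(x,z,y)` with the (again finite) triple sum
`T(x,y,z) = Σ_{α,γ,β} (ε α - ε γ) x_α^γ y_γ^β z_β^α`. Rotating `α → γ → β` matches the terms of
`T(x,y,z)`, `T(y,z,x)` and `T(z,x,y)`, whose weights then telescope to `0`: this is the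
cocycle identity.
-/

namespace FockCocycle

variable {K : Type*} [Field K] {L : Type*} [LieRing L]
  {W : Type*} [AddCommGroup W] [Module K W] [LieRingModule L W]
  {I : Type*} (b : Module.Basis I K W) (J : Set I)

/-- The paper's `x_α^γ`. -/
noncomputable def lieCoeff (x : L) (α γ : I) : K := b.repr ⁅x, b γ⁆ α

noncomputable def crossSign (α γ : I) : K := J.indicator 1 α - J.indicator 1 γ

variable (L) in
def LeaksFinitely : Prop :=
  ∀ x : L, {α ∈ J | ⁅x, b α⁆ ∉ Submodule.span K (⇑b '' J)}.Finite

def leakSupport (x : L) : Set (I × I) :=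
  {p | p.1 ∉ J ∧ p.2 ∈ J ∧ lieCoeff b x p.1 p.2 ≠ 0}

noncomputable def cocycleTerm (x y : L) (p : I × I) : K :=
  crossSign J p.1 p.2 * lieCoeff b x p.1 p.2 * lieCoeff b y p.2 p.1

noncomputable def tripleTerm (x y z : L) (t : (I × I) × I) : K :=
  crossSign J t.1.1 t.1.2 * lieCoeff b x t.1.1 t.1.2 * lieCoeff b y t.1.2 t.2 *
    lieCoeff b z t.2 t.1.1

noncomputable def tripleSum (x y z : L) : K := ∑ᶠ t, tripleTerm b J x y z t

theorem hasFiniteSupport_lieCoeff (x : L) (γ : I) :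
    (fun α => lieCoeff b x α γ).HasFiniteSupport :=
  (b.repr ⁅x, b γ⁆).hasFiniteSupport

@[simp]
theorem lieCoeff_add (x y : L) (α γ : I) :
    lieCoeff b (x + y) α γ = lieCoeff b x α γ + lieCoeff b y α γ := by
  simp [lieCoeff, add_lie]

variable {b J}

theorem crossSign_eq_zero_of_mem_iff {α γ : I} (h : α ∈ J ↔ γ ∈ J) :
    crossSign J α γ = (0 : K) := by
  by_cases hα : α ∈ J
  · simp [crossSign, hα, h.mp hα]
  · simp [crossSign, hα, mt h.mpr hα]

theorem leakSupport_finite (hJ : LeaksFinitely L b J) (x : L) : (leakSupport b J x).Finite := by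
  refine ((hJ x).biUnion fun α _ => (hasFiniteSupport_lieCoeff b x α).image (·, α)).subset ?_
  rintro ⟨γ, α⟩ ⟨hγ, hα, hx⟩
  refine Set.mem_biUnion ⟨hα, fun hspan => hγ ?_⟩ ⟨γ, hx, rfl⟩
  exact b.mem_span_image.mp hspan (Finsupp.mem_support_iff.mpr hx)

theorem leakSupport_extend_finite (hJ : LeaksFinitely L b J) (u v : L) :
    {t : (I × I) × I | t.1 ∈ leakSupport b J u ∧ lieCoeff b v t.2 t.1.1 ≠ 0}.Finite :=
  ((leakSupport_finite hJ u).biUnion fun p _ =>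
    (hasFiniteSupport_lieCoeff b v p.1).image (p, ·)).subset
      fun t ⟨ht, hv⟩ => Set.mem_biUnion ht ⟨t.2, hv, rfl⟩

theorem hasFiniteSupport_cocycleTerm (hJ : LeaksFinitely L b J) (x y : L) :
    (cocycleTerm b J x y).HasFiniteSupport := by
  refine ((leakSupport_finite hJ x).union
    ((leakSupport_finite hJ y).preimage Prod.swap_injective.injOn)).subset ?_
  rintro ⟨α, γ⟩ hp
  simp only [Function.mem_support, cocycleTerm, mul_ne_zero_iff] at hp
  obtain ⟨⟨hsign, hx⟩, hy⟩ := hp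
  by_cases hα : α ∈ J
  · have hγ : γ ∉ J := fun hγ => hsign (crossSign_eq_zero_of_mem_iff (iff_of_true hα hγ))
    exact Or.inr ⟨hγ, hα, hy⟩
  · have hγ : γ ∈ J :=
      by_contra fun hγ => hsign (crossSign_eq_zero_of_mem_iff (iff_of_false hα hγ))
    exact Or.inl ⟨hα, hγ, hx⟩

theorem hasFiniteSupport_tripleTerm (hJ : LeaksFinitely L b J) (x y z : L) :
    (tripleTerm b J x y z).HasFiniteSupport := by
  refine (((leakSupport_extend_finite hJ x z).union
    ((leakSupport_extend_finite hJ y x).image fun t => ((t.2, t.1.1), t.1.2))).union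
    ((leakSupport_extend_finite hJ z y).image fun t => ((t.1.2, t.2), t.1.1))).subset ?_
  rintro ⟨⟨α, γ⟩, β⟩ ht
  simp only [Function.mem_support, tripleTerm, mul_ne_zero_iff] at ht
  obtain ⟨⟨⟨hsign, hx⟩, hy⟩, hz⟩ := ht
  by_cases hα : α ∈ J
  · have hγ : γ ∉ J := fun hγ => hsign (crossSign_eq_zero_of_mem_iff (iff_of_true hα hγ))
    by_cases hβ : β ∈ J
    · exact Or.inl (Or.inr ⟨((γ, β), α), ⟨⟨hγ, hβ, hy⟩, hx⟩, rfl⟩)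
    · exact Or.inr ⟨((β, α), γ), ⟨⟨hβ, hα, hz⟩, hy⟩, rfl⟩
  · have hγ : γ ∈ J :=
      by_contra fun hγ => hsign (crossSign_eq_zero_of_mem_iff (iff_of_false hα hγ))
    exact Or.inl (Or.inl ⟨⟨hα, hγ, hx⟩, hz⟩)

theorem tripleTerm_add_rotate (x y z : L) (α γ β : I) :
    tripleTerm b J x y z ((α, γ), β) + tripleTerm b J y z x ((γ, β), α) +
      tripleTerm b J z x y ((β, α), γ) = 0 := by
  simp only [tripleTerm, crossSign]
  ring

theorem tripleSum_add_rotate (hJ : LeaksFinitely L b J) (x y z : L) :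
    tripleSum b J x y z + tripleSum b J y z x + tripleSum b J z x y = 0 := by
  let rotate : (I × I) × I ≃ (I × I) × I := (Equiv.prodAssoc I I I).trans (Equiv.prodComm _ _)
  have e₁ : tripleSum b J y z x = ∑ᶠ t, tripleTerm b J y z x (rotate t) :=
    (finsum_comp_equiv rotate).symm
  have e₂ : tripleSum b J z x y = ∑ᶠ t, tripleTerm b J z x y (rotate (rotate t)) :=
    (finsum_comp_equiv (rotate.trans rotate)).symm
  have h₀ := hasFiniteSupport_tripleTerm hJ x y z
  have h₁ : (fun t => tripleTerm b J y z x (rotate t)).HasFiniteSupport :=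
    (hasFiniteSupport_tripleTerm hJ y z x).comp_of_injective rotate.injective
  have h₂ : (fun t => tripleTerm b J z x y (rotate (rotate t))).HasFiniteSupport :=
    (hasFiniteSupport_tripleTerm hJ z x y).comp_of_injective (rotate.trans rotate).injective
  rw [e₁, e₂, tripleSum, ← finsum_add_distrib h₀ h₁,
    ← finsum_add_distrib (f := fun t => tripleTerm b J x y z t + tripleTerm b J y z x (rotate t))
      (h₀.add h₁) h₂]
  exact finsum_eq_zero_of_forall_eq_zero fun t => tripleTerm_add_rotate x y z _ _ _

variable [LieAlgebra K L] [LieModule K L W]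

@[simp]
theorem lieCoeff_smul (a : K) (x : L) (α γ : I) :
    lieCoeff b (a • x) α γ = a * lieCoeff b x α γ := by
  simp [lieCoeff, smul_lie]

theorem repr_lie_eq_finsum (v : L) (m : W) (γ : I) :
    b.repr ⁅v, m⁆ γ = ∑ᶠ β, lieCoeff b v γ β * b.repr m β := by
  rw [finsum_eq_sum_of_support_subset _ (s := (b.repr m).support) fun β hβ =>
    Finsupp.mem_support_iff.mpr (right_ne_zero_of_mul hβ)]
  conv_lhs => rw [← b.linearCombination_repr m]
  simp [Finsupp.linearCombination_apply, Finsupp.sum, lie_sum, lieCoeff, mul_comm]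

theorem lieCoeff_lie (v w : L) (γ α : I) :
    lieCoeff b ⁅v, w⁆ γ α =
      ∑ᶠ β, (lieCoeff b v γ β * lieCoeff b w β α - lieCoeff b w γ β * lieCoeff b v β α) := by
  rw [lieCoeff, lie_lie, map_sub, Finsupp.sub_apply, repr_lie_eq_finsum, repr_lie_eq_finsum]
  exact (finsum_sub_distrib (.mul_right _ (hasFiniteSupport_lieCoeff b w α))
    (.mul_right _ (hasFiniteSupport_lieCoeff b v α))).symm

theorem cocycleTerm_lie (x y z : L) (p : I × I) :
    cocycleTerm b J x ⁅y, z⁆ p =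
      ∑ᶠ β, (tripleTerm b J x y z (p, β) - tripleTerm b J x z y (p, β)) := by
  rw [cocycleTerm, lieCoeff_lie, mul_finsum]
  exact finsum_congr fun β => by simp only [tripleTerm]; ring

end FockCocycle

section

open FockCocycle

variable {K : Type*} [Field K] {L : Type*} [LieRing L] [LieAlgebra K L]
  {W : Type*} [AddCommGroup W] [Module K W] [LieRingModule L W] [LieModule K L W]
  {I : Type*} {b : Module.Basis I K W} {J : Set I}

theorem fockCocycle_eq_finsum (hJ : LeaksFinitely L b J) (x y : L) :
    fockCocycle b J x y = ∑ᶠ p, cocycleTerm b J x y p := by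
  classical
  have hsplit : ∀ p : I × I, cocycleTerm b J x y p =
      (if p.1 ∈ J ∧ p.2 ∉ J then b.repr ⁅x, b p.2⁆ p.1 * b.repr ⁅y, b p.1⁆ p.2 else 0) -
      (if p.1 ∉ J ∧ p.2 ∈ J then b.repr ⁅x, b p.2⁆ p.1 * b.repr ⁅y, b p.1⁆ p.2 else 0) := by
    rintro ⟨α, γ⟩
    by_cases hα : α ∈ J <;> by_cases hγ : γ ∈ J <;>
      simp [cocycleTerm, crossSign, lieCoeff, hα, hγ]
  rw [finsum_congr hsplit, finsum_sub_distrib]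
  · rfl
  all_goals
    refine (hasFiniteSupport_cocycleTerm hJ x y).subset fun p hp => ?_
    rw [Function.mem_support, hsplit]
    by_cases hα : p.1 ∈ J <;> by_cases hγ : p.2 ∈ J <;> simp_all

theorem fockCocycle_add_left (hJ : LeaksFinitely L b J) (x x' y : L) :
    fockCocycle b J (x + x') y = fockCocycle b J x y + fockCocycle b J x' y := by
  rw [fockCocycle_eq_finsum hJ, fockCocycle_eq_finsum hJ, fockCocycle_eq_finsum hJ,
    ← finsum_add_distrib (hasFiniteSupport_cocycleTerm hJ x y)
      (hasFiniteSupport_cocycleTerm hJ x' y)]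
  exact finsum_congr fun p => by simp only [cocycleTerm, lieCoeff_add]; ring

theorem fockCocycle_add_right (hJ : LeaksFinitely L b J) (x y y' : L) :
    fockCocycle b J x (y + y') = fockCocycle b J x y + fockCocycle b J x y' := by
  rw [fockCocycle_eq_finsum hJ, fockCocycle_eq_finsum hJ, fockCocycle_eq_finsum hJ,
    ← finsum_add_distrib (hasFiniteSupport_cocycleTerm hJ x y)
      (hasFiniteSupport_cocycleTerm hJ x y')]
  exact finsum_congr fun p => by simp only [cocycleTerm, lieCoeff_add]; ring

theorem fockCocycle_smul_left (hJ : LeaksFinitely L b J) (a : K) (x y : L) :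
    fockCocycle b J (a • x) y = a * fockCocycle b J x y := by
  simp only [fockCocycle_eq_finsum hJ, mul_finsum, cocycleTerm, lieCoeff_smul]
  exact finsum_congr fun _ => by ring

theorem fockCocycle_smul_right (hJ : LeaksFinitely L b J) (a : K) (x y : L) :
    fockCocycle b J x (a • y) = a * fockCocycle b J x y := by
  simp only [fockCocycle_eq_finsum hJ, mul_finsum, cocycleTerm, lieCoeff_smul]
  exact finsum_congr fun _ => by ring

theorem fockCocycle_self (x : L) : fockCocycle b J x x = 0 := by
  classical
  rw [fockCocycle, sub_eq_zero, ← finsum_comp_equiv (Equiv.prodComm I I)]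
  exact finsum_congr fun p => if_congr and_comm (mul_comm _ _) rfl

theorem fockCocycle_zero_left (y : L) : fockCocycle b J 0 y = 0 := by
  simp [fockCocycle]

theorem fockCocycle_zero_right (x : L) : fockCocycle b J x 0 = 0 := by
  simp [fockCocycle]

theorem fockCocycle_lie (hJ : LeaksFinitely L b J) (x y z : L) :
    fockCocycle b J x ⁅y, z⁆ = tripleSum b J x y z - tripleSum b J x z y := by
  have hxyz := hasFiniteSupport_tripleTerm hJ x y z
  have hxzy := hasFiniteSupport_tripleTerm hJ x z y
  rw [fockCocycle_eq_finsum hJ, finsum_congr (cocycleTerm_lie x y z), tripleSum, tripleSum,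
    ← finsum_sub_distrib hxyz hxzy]
  exact (finsum_curry (fun t => tripleTerm b J x y z t - tripleTerm b J x z y t)
    (hxyz.sub hxzy)).symm

theorem fockCocycle_jacobi (hJ : LeaksFinitely L b J) (x y z : L) :
    fockCocycle b J x ⁅y, z⁆ + fockCocycle b J y ⁅z, x⁆ + fockCocycle b J z ⁅x, y⁆ = 0 := by
  rw [fockCocycle_lie hJ, fockCocycle_lie hJ, fockCocycle_lie hJ]
  linear_combination tripleSum_add_rotate hJ x y z - tripleSum_add_rotate hJ x z y

end

theorem stmt2_general (K : Type*) [Field K]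
    (L : Type*) [LieRing L] [LieAlgebra K L]
    (W : Type*) [AddCommGroup W] [Module K W] [LieRingModule L W] [LieModule K L W]
    (I : Type*) (b : Module.Basis I K W) (J : Set I)
    (hJ : ∀ x : L, {α ∈ J | ⁅x, b α⁆ ∉ Submodule.span K (⇑b '' J)}.Finite) :
    (∀ p q r : L × K, extBracket b J (p + q) r = extBracket b J p r + extBracket b J q r) ∧
    (∀ p q r : L × K, extBracket b J p (q + r) = extBracket b J p q + extBracket b J p r) ∧
    (∀ (a : K) (p q : L × K), extBracket b J (a • p) q = a • extBracket b J p q) ∧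
    (∀ (a : K) (p q : L × K), extBracket b J p (a • q) = a • extBracket b J p q) ∧
    (∀ p : L × K, extBracket b J p p = 0) ∧
    (∀ p q r : L × K,
      extBracket b J p (extBracket b J q r) + extBracket b J q (extBracket b J r p)
        + extBracket b J r (extBracket b J p q) = 0) ∧
    Function.Surjective (Prod.fst : L × K → L) ∧
    (∀ p q : L × K, (extBracket b J p q).1 = ⁅p.1, q.1⁆) ∧
    (∀ (k : K) (p : L × K),
      extBracket b J (0, k) p = 0 ∧ extBracket b J p (0, k) = 0) :=
  ⟨fun _ _ _ => Prod.ext (add_lie _ _ _) (fockCocycle_add_left hJ _ _ _),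
    fun _ _ _ => Prod.ext (lie_add _ _ _) (fockCocycle_add_right hJ _ _ _),
    fun _ _ _ => Prod.ext (smul_lie _ _ _) (fockCocycle_smul_left hJ _ _ _),
    fun _ _ _ => Prod.ext (lie_smul _ _ _) (fockCocycle_smul_right hJ _ _ _),
    fun _ => Prod.ext (lie_self _) (fockCocycle_self _),
    fun _ _ _ => Prod.ext (lie_jacobi _ _ _) (fockCocycle_jacobi hJ _ _ _),
    fun x => ⟨(x, 0), rfl⟩,
    fun _ _ => rfl,
    fun _ _ => ⟨Prod.ext (zero_lie _) (fockCocycle_zero_left _),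
      Prod.ext (lie_zero _) (fockCocycle_zero_right _)⟩⟩

/-- the bracket `⁅(x,s),(y,t)⁆ := ([x,y], c(x,y))` on `𝔤 ⊕ K` is
`K`-bilinear, alternating, and satisfies the Jacobi identity, so it makes `𝔤 ⊕ K`
a Lie algebra over `K`; the projection onto the first factor is a surjective Lie
algebra homomorphism whose kernel `{0} ⊕ K` is contained in the center. -/
theorem stmt2 (K : Type*) [Field K] [CharZero K]
    (L : Type*) [LieRing L] [LieAlgebra K L]
    (W : Type*) [AddCommGroup W] [Module K W] [LieRingModule L W] [LieModule K L W]
    (I : Type*) (b : Module.Basis I K W) (J : Set I)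
    (hJ : ∀ x : L, {α ∈ J | ⁅x, b α⁆ ∉ Submodule.span K (⇑b '' J)}.Finite) :
    (∀ p q r : L × K, extBracket b J (p + q) r = extBracket b J p r + extBracket b J q r) ∧
    (∀ p q r : L × K, extBracket b J p (q + r) = extBracket b J p q + extBracket b J p r) ∧
    (∀ (a : K) (p q : L × K), extBracket b J (a • p) q = a • extBracket b J p q) ∧
    (∀ (a : K) (p q : L × K), extBracket b J p (a • q) = a • extBracket b J p q) ∧
    (∀ p : L × K, extBracket b J p p = 0) ∧
    (∀ p q r : L × K,
      extBracket b J p (extBracket b J q r) + extBracket b J q (extBracket b J r p)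
        + extBracket b J r (extBracket b J p q) = 0) ∧
    Function.Surjective (Prod.fst : L × K → L) ∧
    (∀ p q : L × K, (extBracket b J p q).1 = ⁅p.1, q.1⁆) ∧
    (∀ (k : K) (p : L × K),
      extBracket b J (0, k) p = 0 ∧ extBracket b J p (0, k) = 0) :=
  stmt2_general K L W I b J hJ
end

section
/- For every integer r and all natural numbers ℓ, s with s < r: Σ_{b=s−r}^{−1} (b+r−s)_ℓ · (b)_s = (−1)^s · ℓ! · s! · binom(r, s+ℓ+1), an identity of integers (the sum is over the integers b with s−r ≤ b ≤ −1). -/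
/-- The falling factorial `(a)_k = a(a−1)⋯(a−k+1)` for `a : ℤ`, with `(a)_0 = 1`. -/
def fallFact (a : ℤ) (k : ℕ) : ℤ := ∏ i ∈ Finset.range k, (a - i)

/-- The generalized binomial coefficient `binom(a,k) = (a)_k / k! ∈ ℤ`
for `a : ℤ` and `k : ℕ` (the division is exact). -/
def intBinom (a : ℤ) (k : ℕ) : ℤ := fallFact a k / (k.factorial : ℤ)

/-! Since `(b)_s = 0` for `0 ≤ b < s`, the sum may as well run over `s - r ≤ b < s`. Writing
`b = s - r + i` and `j = r - 1 - i`, the first factor is `(i)_ℓ`, and upper negation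
`(-a)_s = (-1)^s (a+s-1)_s` turns the second into `(-1)^s (j)_s`. As `(n)_k = k! C(n,k)` for natural
`n`, what remains is the upper Vandermonde identity `Σ_{i+j=m} C(i,a) C(j,b) = C(m+1, a+b+1)`. -/

open Finset

theorem Nat.sum_antidiagonal_choose_mul_choose (a : ℕ) :
    ∀ m b : ℕ, ∑ p ∈ antidiagonal m, p.1.choose a * p.2.choose b = (m + 1).choose (a + b + 1)
  | 0, b => by cases a <;> cases b <;> simp [choose_eq_zero_of_lt]
  | m + 1, 0 => by
    have ih := sum_antidiagonal_choose_mul_choose a m 0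
    simp only [choose_zero_right, mul_one, add_zero] at ih ⊢
    rw [Finset.Nat.sum_antidiagonal_succ', ih, choose_succ_succ (m + 1) a]
  | m + 1, b + 1 => by
    have pascal : ∀ p ∈ antidiagonal m, p.1.choose a * (p.2 + 1).choose (b + 1)
        = p.1.choose a * p.2.choose b + p.1.choose a * p.2.choose (b + 1) := fun p _ => by
      rw [choose_succ_succ, mul_add]
    rw [Finset.Nat.sum_antidiagonal_succ', choose_zero_succ, mul_zero, zero_add, sum_congr rfl pascal,
      sum_add_distrib, sum_antidiagonal_choose_mul_choose a m b,
      sum_antidiagonal_choose_mul_choose a m (b + 1), ← add_assoc, choose_succ_succ (m + 1)]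

theorem Nat.sum_range_choose_mul_choose (a b m : ℕ) :
    ∑ k ∈ range (m + 1), k.choose a * (m - k).choose b = (m + 1).choose (a + b + 1) := by
  rw [← sum_antidiagonal_choose_mul_choose, Nat.sum_antidiagonal_eq_sum_range_succ_mk]

theorem Int.sum_Ico_add_eq_sum_range {M : Type*} [AddCommMonoid M] (f : ℤ → M) (a : ℤ) (n : ℕ) :
    ∑ b ∈ Ico a (a + n), f b = ∑ k ∈ Finset.range n, f (a + k) := by
  simp [Int.Ico_eq_finset_map]

theorem fallFact_eq_descPochhammer_eval (a : ℤ) (k : ℕ) :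
    fallFact a k = (descPochhammer ℤ k).eval a :=
  (descPochhammer_eval_eq_prod_range k a).symm

theorem fallFact_neg (a : ℤ) (k : ℕ) : fallFact (-a) k = (-1) ^ k * fallFact (a + k - 1) k := by
  rw [fallFact_eq_descPochhammer_eval, descPochhammer_eval_eq_ascPochhammer,
    show -a - k + 1 = -(a + k - 1) by ring, ascPochhammer_eval_neg_eq_descPochhammer,
    fallFact_eq_descPochhammer_eval]

theorem fallFact_natCast (m k : ℕ) : fallFact m k = k.factorial * m.choose k := by
  rw [fallFact_eq_descPochhammer_eval, descPochhammer_eval_eq_descFactorial,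
    Nat.descFactorial_eq_factorial_mul_choose, Nat.cast_mul]

theorem fallFact_natCast_of_lt {m k : ℕ} (h : m < k) : fallFact m k = 0 := by
  simp [fallFact_natCast, Nat.choose_eq_zero_of_lt h]

theorem intBinom_natCast (m k : ℕ) : intBinom m k = m.choose k := by
  rw [intBinom, fallFact_natCast, Int.mul_ediv_cancel_left _ (mod_cast k.factorial_ne_zero)]

/-- for every integer `r` and all naturals `ℓ, s` with `s < r`:
`Σ_{b=s−r}^{−1} (b+r−s)_ℓ (b)_s = (−1)^s ℓ! s! binom(r, s+ℓ+1)`. -/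
theorem stmt12 (r : ℤ) (ℓ s : ℕ) (h : (s : ℤ) < r) :
    ∑ b ∈ Finset.Icc ((s : ℤ) - r) (-1 : ℤ), fallFact (b + r - s) ℓ * fallFact b s
      = (-1) ^ s * (ℓ.factorial : ℤ) * (s.factorial : ℤ) * intBinom r (s + ℓ + 1) := by
  obtain ⟨m, rfl⟩ : ∃ m : ℕ, r = m + 1 := ⟨(r - 1).toNat, by omega⟩
  have extend : ∑ b ∈ Icc ((s : ℤ) - (m + 1)) (-1), fallFact (b + (m + 1) - s) ℓ * fallFact b s
      = ∑ b ∈ Ico ((s : ℤ) - (m + 1)) (s - (m + 1) + (m + 1 : ℕ)),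
          fallFact (b + (m + 1) - s) ℓ * fallFact b s := by
    refine sum_subset (fun b hb => by simp only [mem_Icc, mem_Ico] at hb ⊢; omega) fun b hb hb' => ?_
    simp only [mem_Icc, mem_Ico, not_and_or, not_le] at hb hb'
    obtain ⟨j, rfl⟩ : ∃ j : ℕ, b = j := ⟨b.toNat, by omega⟩
    rw [fallFact_natCast_of_lt (by omega), mul_zero]
  have term : ∀ k ∈ range (m + 1),
      fallFact ((s : ℤ) - (m + 1) + (k : ℕ) + (m + 1) - s) ℓ * fallFact (s - (m + 1) + (k : ℕ)) s
        = (-1) ^ s * ℓ.factorial * s.factorial * (k.choose ℓ * (m - k).choose s : ℕ) := by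
    intro k hk
    have hkm : k ≤ m := Nat.lt_succ_iff.mp (mem_range.mp hk)
    rw [show (s : ℤ) - (m + 1) + k + (m + 1) - s = k by ring,
      show (s : ℤ) - (m + 1) + k = -((m + 1 - s - k : ℤ)) by ring, fallFact_neg,
      show (m + 1 - s - k : ℤ) + s - 1 = (m - k : ℕ) by omega, fallFact_natCast, fallFact_natCast]
    push_cast
    ring
  rw [extend, Int.sum_Ico_add_eq_sum_range, sum_congr rfl term, ← mul_sum, ← Nat.cast_sum,
    Nat.sum_range_choose_mul_choose, ← Nat.cast_add_one,
    intBinom_natCast, add_comm ℓ s]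
end
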